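/- Feinstein-type converse kernel: for an (M, ε)-average-error code (f, φ) for a channel W : X → Y with uniform message M on {1,…,M}, and any output distribution Q on Y, letting δ(m, m̂) = 1{m ≠ m̂}, one has E over P_M × Q_{M̂} of δ equal to 1 - 1/M, where Q_{M̂} is the distribution of φ(Y) with Y ∼ Q. Consequently D_h^ε(P_{M M̂} ‖ P_M × Q_{M̂}) ≥ log M + log(1-ε). -/

import Mathlib

open scoped Classical

/-- Minimum type-II error over randomized tests with type-I error at most `ε`. -/
noncomputable def betaHT {Z : Type} [Fintype Z] (P Q : Z → ℝ) (ε : ℝ) : ℝ :=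
  sInf {b : ℝ | ∃ δ : Z → ℝ, (∀ z, 0 ≤ δ z ∧ δ z ≤ 1) ∧
    (∑ z, P z * δ z) ≤ ε ∧ b = ∑ z, Q z * (1 - δ z)}

/-- The ε-hypothesis testing divergence, `⊤` when `β_{1-ε}(P,Q) = 0`. -/
noncomputable def Dh {Z : Type} [Fintype Z] (P Q : Z → ℝ) (ε : ℝ) : EReal :=
  if betaHT P Q ε = 0 then ⊤ else ((-Real.log (betaHT P Q ε / (1 - ε)) : ℝ) : EReal)

/-!
The decoding-error indicator `δ(m, m̂) = 1{m ≠ m̂}` is a test whose type-I error under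
`P_{M M̂}` is the average error probability of the code, hence at most `ε`. Under
`P_M × Q_{M̂}` the message is uniform and independent of `M̂`, so `m = m̂` has probability
exactly `1/M` whatever `Q` is; thus `β_{1-ε} ≤ 1/M`, which is the divergence bound.
-/

open Finset

section HypothesisTesting

variable {Z : Type} [Fintype Z] {P Q : Z → ℝ} {ε : ℝ}

lemma betaHT_nonneg (hQ : ∀ z, 0 ≤ Q z) : 0 ≤ betaHT P Q ε := by
  refine Real.sInf_nonneg ?_
  rintro b ⟨δ, hδ, -, rfl⟩
  exact sum_nonneg fun z _ => mul_nonneg (hQ z) (sub_nonneg.mpr (hδ z).2)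

lemma betaHT_le_of_test (hQ : ∀ z, 0 ≤ Q z) (δ : Z → ℝ) (hδ : ∀ z, 0 ≤ δ z ∧ δ z ≤ 1)
    (hI : ∑ z, P z * δ z ≤ ε) : betaHT P Q ε ≤ ∑ z, Q z * (1 - δ z) := by
  refine csInf_le ⟨0, ?_⟩ ⟨δ, hδ, hI, rfl⟩
  rintro b ⟨δ', hδ', -, rfl⟩
  exact sum_nonneg fun z _ => mul_nonneg (hQ z) (sub_nonneg.mpr (hδ' z).2)

lemma le_Dh_of_betaHT_le (hQ : ∀ z, 0 ≤ Q z) (hε : ε < 1) {b : ℝ}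
    (hβ : betaHT P Q ε ≤ b) : ((-Real.log (b / (1 - ε)) : ℝ) : EReal) ≤ Dh P Q ε := by
  unfold Dh
  split_ifs with h0
  · exact le_top
  · have hβpos : 0 < betaHT P Q ε := (betaHT_nonneg hQ).lt_of_ne' h0
    have hε' : 0 < 1 - ε := sub_pos.mpr hε
    exact EReal.coe_le_coe_iff.mpr <| neg_le_neg <|
      Real.log_le_log (div_pos hβpos hε') (div_le_div_of_nonneg_right hβ hε'.le)

end HypothesisTesting

section ErrorIndicator

variable {ι : Type} [Fintype ι] [DecidableEq ι]

lemma sum_mul_ite_ne (c : ι → ℝ) (i : ι) :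
    ∑ j, c j * (if i ≠ j then 1 else 0) = ∑ j, c j - c i := by
  have h (j : ι) : c j * (if i ≠ j then 1 else 0) = c j - if i = j then c j else 0 := by
    split_ifs <;> simp_all
  simp only [h, sum_sub_distrib, Fintype.sum_ite_eq]

lemma sum_mul_one_sub_ite_ne (c : ι → ℝ) (i : ι) :
    ∑ j, c j * (1 - if i ≠ j then 1 else 0) = c i := by
  simp only [mul_sub, mul_one, sum_sub_distrib, sum_mul_ite_ne]
  ring

lemma sum_fiber_mul_ite_ne {Y : Type} [Fintype Y] (φ : Y → ι) (w : Y → ℝ) (i : ι) :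
    ∑ j, (∑ y ∈ univ.filter (fun y => φ y = j), w y) * (if i ≠ j then 1 else 0)
      = ∑ y ∈ univ.filter (fun y => φ y ≠ i), w y := by
  calc _ = ∑ j, ∑ y ∈ univ.filter (fun y => φ y = j), if φ y ≠ i then w y else 0 := by
        refine sum_congr rfl fun j _ => ?_
        rw [sum_mul]
        refine sum_congr rfl fun y hy => ?_
        simp only [(mem_filter.mp hy).2, ne_comm]
        split_ifs <;> simp
    _ = _ := by rw [sum_fiberwise, sum_filter]

end ErrorIndicator

theorem stmt15_general {X Y : Type} [Fintype X] [Fintype Y] (M : ℕ) (hM : 0 < M)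
    (W : X → Y → ℝ)
    (f : Fin M → X) (φ : Y → Fin M)
    (ε : ℝ) (hε1 : ε < 1)
    (hcode : (1 / (M : ℝ)) *
        ∑ m, ∑ y ∈ Finset.univ.filter (fun y => φ y ≠ m), W (f m) y ≤ ε)
    (Q : Y → ℝ) (hQ0 : ∀ y, 0 ≤ Q y) (hQ1 : ∑ y, Q y = 1) :
    (∑ m : Fin M, ∑ m' : Fin M,
        ((1 / (M : ℝ)) * ∑ y ∈ Finset.univ.filter (fun y => φ y = m'), Q y) *
          (if m ≠ m' then 1 else 0)) = 1 - 1 / (M : ℝ)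
    ∧ ((Real.log M + Real.log (1 - ε) : ℝ) : EReal)
        ≤ Dh
            (fun p : Fin M × Fin M =>
              (1 / (M : ℝ)) * ∑ y ∈ Finset.univ.filter (fun y => φ y = p.2), W (f p.1) y)
            (fun p : Fin M × Fin M =>
              (1 / (M : ℝ)) * ∑ y ∈ Finset.univ.filter (fun y => φ y = p.2), Q y) ε := by
  have hQM : ∑ m', (1 / (M : ℝ)) * ∑ y ∈ univ.filter (fun y => φ y = m'), Q y = 1 / M := by
    rw [← mul_sum, sum_fiberwise, hQ1, mul_one]
  refine ⟨?_, ?_⟩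
  · simp only [sum_mul_ite_ne, hQM, sum_sub_distrib, sum_const, card_univ, Fintype.card_fin,
      nsmul_eq_mul, mul_one_div_cancel (Nat.cast_ne_zero.mpr hM.ne' : (M : ℝ) ≠ 0)]
  · let δ : Fin M × Fin M → ℝ := fun p => if p.1 ≠ p.2 then 1 else 0
    have hδ (p : Fin M × Fin M) : 0 ≤ δ p ∧ δ p ≤ 1 := by
      simp only [δ]; split_ifs <;> norm_num
    have hI : ∑ p, (1 / (M : ℝ)) * (∑ y ∈ univ.filter (fun y => φ y = p.2), W (f p.1) y) * δ p
        ≤ ε := by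
      simpa only [Fintype.sum_prod_type, δ, mul_assoc, ← mul_sum, sum_fiber_mul_ite_ne] using hcode
    have hII : ∑ p, (1 / (M : ℝ)) * (∑ y ∈ univ.filter (fun y => φ y = p.2), Q y) * (1 - δ p)
        = 1 / M := by
      simp only [Fintype.sum_prod_type, δ, sum_mul_one_sub_ite_ne, hQM]
    have hQ : ∀ p : Fin M × Fin M,
        0 ≤ (1 / (M : ℝ)) * ∑ y ∈ univ.filter (fun y => φ y = p.2), Q y :=
      fun p => mul_nonneg (by positivity) (sum_nonneg fun y _ => hQ0 y)
    have hβ := betaHT_le_of_test hQ δ hδ hI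
    rw [hII] at hβ
    convert le_Dh_of_betaHT_le hQ hε1 hβ using 2
    rw [Real.log_div (by positivity) (sub_pos.mpr hε1).ne', one_div, Real.log_inv]
    ring

/-- Feinstein-type converse kernel: for an `(M,ε)`-average-error code `(f, φ)` for a
channel `W : X → Y` with uniform message, and any output distribution `Q` on `Y`,
the test `δ(m,m̂) = 1{m ≠ m̂}` satisfies `E_{P_M × Q_{M̂}}[δ] = 1 - 1/M`; consequently
`D_h^ε(P_{M M̂} ‖ P_M × Q_{M̂}) ≥ log M + log(1-ε)`. -/
theorem stmt15 {X Y : Type} [Fintype X] [Fintype Y] (M : ℕ) (hM : 0 < M)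
    (W : X → Y → ℝ) (hW0 : ∀ x y, 0 ≤ W x y) (hW1 : ∀ x, ∑ y, W x y = 1)
    (f : Fin M → X) (φ : Y → Fin M)
    (ε : ℝ) (hε0 : 0 < ε) (hε1 : ε < 1)
    (hcode : (1 / (M : ℝ)) *
        ∑ m, ∑ y ∈ Finset.univ.filter (fun y => φ y ≠ m), W (f m) y ≤ ε)
    (Q : Y → ℝ) (hQ0 : ∀ y, 0 ≤ Q y) (hQ1 : ∑ y, Q y = 1) :
    (∑ m : Fin M, ∑ m' : Fin M,
        ((1 / (M : ℝ)) * ∑ y ∈ Finset.univ.filter (fun y => φ y = m'), Q y) *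
          (if m ≠ m' then 1 else 0)) = 1 - 1 / (M : ℝ)
    ∧ ((Real.log M + Real.log (1 - ε) : ℝ) : EReal)
        ≤ Dh
            (fun p : Fin M × Fin M =>
              (1 / (M : ℝ)) * ∑ y ∈ Finset.univ.filter (fun y => φ y = p.2), W (f p.1) y)
            (fun p : Fin M × Fin M =>
              (1 / (M : ℝ)) * ∑ y ∈ Finset.univ.filter (fun y => φ y = p.2), Q y) ε :=
  stmt15_general M hM W f φ ε hε1 hcode Q hQ0 hQ1
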